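/- arXiv:2210.04551 — 2 statements merged into one kernel-verified Lean document; each statement's English description precedes it below -/
import Mathlib

section
/- Let ℱ be a family of subsets of X and let ℱ* = { {s ∈ ℱ : x ∈ s} : x ∈ X } be its dual family. If ℱ has finite VC-dimension d, then ℱ* has VC-dimension strictly less than 2^(d+1). -/
/-- `A` is shattered by the family `F`: every subset of `A` is the trace of a member of `F`. -/
def SetShatters {α : Type*} (F : Set (Set α)) (A : Set α) : Prop :=
  ∀ B ⊆ A, ∃ s ∈ F, s ∩ A = B

/-- The dual family `F* = { {s ∈ F : x ∈ s} : x ∈ X }`. -/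
def DualFamily {α : Type*} (F : Set (Set α)) : Set (Set (Set α)) :=
  {T | ∃ x : α, T = {s ∈ F | x ∈ s}}

/-- If `F` has VC-dimension at most `d` (no shattered set of size `> d`), then the dual
family shatters no set of size `≥ 2^(d+1)`, i.e. `VC*(F) < 2^(d+1)`. -/
theorem stmt1 {α : Type*} (F : Set (Set α)) (d : ℕ)
    (h : ∀ A : Finset α, SetShatters F ↑A → A.card ≤ d) :
    ∀ A : Finset (Set α), SetShatters (DualFamily F) ↑A → A.card < 2 ^ (d + 1) := by
  classical
  intro A hA
  by_contra hlt
  push_neg at hlt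
  set n := d + 1 with hn
  obtain ⟨A', hA'sub, hA'card⟩ := Finset.exists_subset_card_eq hlt
  have hsub : (↑A' : Set (Set α)) ⊆ ↑A := Finset.coe_subset.mpr hA'sub
  -- shattering restricts to subsets
  have hSh : SetShatters (DualFamily F) ↑A' := by
    intro B hB
    obtain ⟨s, hs, hsA⟩ := hA B (hB.trans hsub)
    refine ⟨s, hs, ?_⟩
    ext y
    constructor
    · rintro ⟨hy1, hy2⟩
      have : y ∈ s ∩ ↑A := ⟨hy1, hsub hy2⟩
      rw [hsA] at this
      exact this
    · intro hyB
      have hyA : y ∈ (↑A' : Set (Set α)) := hB hyB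
      have : y ∈ s ∩ ↑A := hsA ▸ hyB
      exact ⟨this.1, hyA⟩
  -- all members of A' are in F
  have hF : ∀ s ∈ A', s ∈ F := by
    obtain ⟨T, hT, hTA⟩ := hSh ↑A' subset_rfl
    obtain ⟨x₀, rfl⟩ := hT
    intro s hs
    have : s ∈ {s ∈ F | x₀ ∈ s} ∩ ↑A' := by rw [hTA]; exact_mod_cast hs
    exact this.1.1
  -- an equiv between subsets of Fin n and A'
  have e : Finset (Fin n) ≃ {s // s ∈ A'} :=
    Fintype.equivOfCardEq (by simp [Fintype.card_finset, hA'card])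
  -- for each i, a point x i witnessing the "i-th bit" subfamily
  have key : ∀ i : Fin n, ∃ x : α, ∀ t : {s // s ∈ A'},
      ((t.1 ∈ F ∧ x ∈ t.1) ↔ i ∈ e.symm t) := by
    intro i
    have hBsub : (Subtype.val '' {t : {s // s ∈ A'} | i ∈ e.symm t}) ⊆ (↑A' : Set (Set α)) := by
      rintro y ⟨t, _, rfl⟩
      exact_mod_cast t.2
    obtain ⟨T, hT, hTA⟩ := hSh _ hBsub
    obtain ⟨x, rfl⟩ := hT
    refine ⟨x, fun t => ?_⟩
    have ht : t.1 ∈ (↑A' : Set (Set α)) := by exact_mod_cast t.2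
    constructor
    · intro hmem
      have : t.1 ∈ Subtype.val '' {t : {s // s ∈ A'} | i ∈ e.symm t} := by
        rw [← hTA]; exact ⟨⟨hmem.1, hmem.2⟩, ht⟩
      obtain ⟨t', ht', hval⟩ := this
      have : t' = t := Subtype.val_injective hval
      rwa [this] at ht'
    · intro hi
      have : t.1 ∈ {s ∈ F | x ∈ s} ∩ ↑A' := by
        rw [hTA]; exact ⟨t, hi, rfl⟩
      exact ⟨this.1.1, this.1.2⟩
  choose x hx using key
  -- x is injective
  have hinj : Function.Injective x := by
    intro i j hij
    have h1 : ((e {i}).1 ∈ F ∧ x i ∈ (e {i}).1) := by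
      rw [hx i (e {i}), Equiv.symm_apply_apply]; exact Finset.mem_singleton_self i
    have h2 : j ∈ e.symm (e {i}) := by
      rw [← hx j (e {i})]
      exact ⟨h1.1, hij ▸ h1.2⟩
    rw [Equiv.symm_apply_apply] at h2
    exact (Finset.mem_singleton.mp h2).symm
  -- F shatters the image of x
  set X : Finset α := Finset.univ.image x with hX
  have hXcard : X.card = n := by
    rw [hX, Finset.card_image_of_injective _ hinj, Finset.card_univ, Fintype.card_fin]
  have hXsh : SetShatters F ↑X := by
    intro C hC
    set J : Finset (Fin n) := Finset.univ.filter (fun i => x i ∈ C) with hJ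
    refine ⟨(e J).1, hF _ (e J).2, ?_⟩
    have hbit : ∀ i : Fin n, x i ∈ (e J).1 ↔ i ∈ J := by
      intro i
      constructor
      · intro hmem
        have := (hx i (e J)).mp ⟨hF _ (e J).2, hmem⟩
        rwa [Equiv.symm_apply_apply] at this
      · intro hi
        have : i ∈ e.symm (e J) := by rwa [Equiv.symm_apply_apply]
        exact ((hx i (e J)).mpr this).2
    ext y
    constructor
    · rintro ⟨hy1, hy2⟩
      obtain ⟨i, _, rfl⟩ := Finset.mem_image.mp (by exact_mod_cast hy2)
      have : i ∈ J := (hbit i).mp hy1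
      exact (Finset.mem_filter.mp this).2
    · intro hyC
      have hyX : y ∈ (↑X : Set α) := hC hyC
      obtain ⟨i, _, rfl⟩ := Finset.mem_image.mp (by exact_mod_cast hyX)
      have : i ∈ J := Finset.mem_filter.mpr ⟨Finset.mem_univ i, hyC⟩
      exact ⟨(hbit i).mpr this, hyX⟩
  have := h X hXsh
  omega
end

section
/- A family ℱ of subsets of X is a VC-class (has finite VC-dimension) if and only if its dual family ℱ* is a VC-class. -/
/-- `F` is a VC-class: the sizes of shattered finite sets are bounded. -/
def IsVCClass {α : Type*} (F : Set (Set α)) : Prop :=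
  ∃ n : ℕ, ∀ A : Finset α, SetShatters F ↑A → A.card ≤ n

section Aux

variable {α : Type*}

lemma aux_dual_to_primal {F : Set (Set α)} {k : ℕ} (A : Finset (Set α))
    (h : SetShatters (DualFamily F) ↑A) (hc : 2 ^ k ≤ A.card) :
    ∃ P : Finset α, SetShatters F ↑P ∧ P.card = k := by
  classical
  -- every member of A is in F
  have hAF : (↑A : Set (Set α)) ⊆ F := by
    obtain ⟨T, hT, hTA⟩ := h ↑A subset_rfl
    obtain ⟨x, rfl⟩ := hT
    intro s hs
    exact ((Set.inter_eq_right.mp hTA) hs).1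
  -- an embedding of the powerset of Fin k into A
  obtain ⟨e⟩ : Nonempty (Finset (Fin k) ↪ {s // s ∈ A}) := by
    apply Function.Embedding.nonempty_of_card_le
    simpa using hc
  set φ : Finset (Fin k) → Set α := fun C => (e C : Set α) with hφ
  have hφinj : Function.Injective φ := fun C D hCD => e.injective (Subtype.ext hCD)
  have hφA : ∀ C, φ C ∈ A := fun C => (e C).2
  have hφF : ∀ C, φ C ∈ F := fun C => hAF (hφA C)
  -- pick witnesses x i
  have key : ∀ i : Fin k, ∃ x : α, {s ∈ F | x ∈ s} ∩ ↑A = φ '' {C | i ∈ C} := by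
    intro i
    have hsub : φ '' {C | i ∈ C} ⊆ ↑A := by
      rintro t ⟨C, _, rfl⟩; exact hφA C
    obtain ⟨T, ⟨x, rfl⟩, hT⟩ := h _ hsub
    exact ⟨x, hT⟩
  choose x hx using key
  have hmem : ∀ (i : Fin k) (C : Finset (Fin k)), x i ∈ φ C ↔ i ∈ C := by
    intro i C
    constructor
    · intro hxi
      have : φ C ∈ {s ∈ F | x i ∈ s} ∩ ↑A := ⟨⟨hφF C, hxi⟩, hφA C⟩
      rw [hx i] at this
      obtain ⟨C', hiC', hCC'⟩ := this
      exact hφinj hCC' ▸ hiC'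
    · intro hiC
      have : φ C ∈ φ '' {C | i ∈ C} := ⟨C, hiC, rfl⟩
      rw [← hx i] at this
      exact this.1.2
  have hxinj : Function.Injective x := by
    intro i j hij
    have h1 : x j ∈ φ {i} := by rw [← hij, hmem]; exact Finset.mem_singleton_self i
    have := (hmem j {i}).mp h1
    exact (Finset.mem_singleton.mp this).symm
  refine ⟨Finset.univ.image x, ?_, by
    rw [Finset.card_image_of_injective _ hxinj, Finset.card_univ, Fintype.card_fin]⟩
  intro B hB
  set C : Finset (Fin k) := Finset.univ.filter (fun i => x i ∈ B) with hC
  refine ⟨φ C, hφF C, ?_⟩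
  ext y
  simp only [Set.mem_inter_iff, Finset.coe_image, Set.mem_image, Finset.mem_coe,
    Finset.mem_univ, Finset.coe_univ, Set.mem_univ, true_and]
  constructor
  · rintro ⟨hys, i, _, rfl⟩
    have : i ∈ C := (hmem i C).mp hys
    exact (Finset.mem_filter.mp this).2
  · intro hyB
    obtain ⟨i, rfl⟩ := by
      have := hB hyB
      simpa using this
    refine ⟨(hmem i C).mpr ?_, i, rfl⟩
    exact Finset.mem_filter.mpr ⟨Finset.mem_univ i, hyB⟩

lemma aux_primal_to_dual {F : Set (Set α)} {k : ℕ} (A : Finset α)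
    (h : SetShatters F ↑A) (hc : 2 ^ k ≤ A.card) :
    ∃ P : Finset (Set α), SetShatters (DualFamily F) ↑P ∧ P.card = k := by
  classical
  obtain ⟨e⟩ : Nonempty (Finset (Fin k) ↪ {a // a ∈ A}) := by
    apply Function.Embedding.nonempty_of_card_le
    simpa using hc
  set φ : Finset (Fin k) → α := fun C => (e C : α) with hφ
  have hφinj : Function.Injective φ := fun C D hCD => e.injective (Subtype.ext hCD)
  have hφA : ∀ C, φ C ∈ A := fun C => (e C).2
  have key : ∀ i : Fin k, ∃ s ∈ F, s ∩ ↑A = φ '' {C | i ∈ C} := by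
    intro i
    apply h
    rintro t ⟨C, _, rfl⟩; exact hφA C
  choose s hsF hs using key
  have hmem : ∀ (i : Fin k) (C : Finset (Fin k)), φ C ∈ s i ↔ i ∈ C := by
    intro i C
    constructor
    · intro hmc
      have : φ C ∈ s i ∩ ↑A := ⟨hmc, hφA C⟩
      rw [hs i] at this
      obtain ⟨C', hiC', hCC'⟩ := this
      exact hφinj hCC' ▸ hiC'
    · intro hiC
      have : φ C ∈ φ '' {C | i ∈ C} := ⟨C, hiC, rfl⟩
      rw [← hs i] at this
      exact this.1
  have hsinj : Function.Injective s := by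
    intro i j hij
    have h1 : φ {i} ∈ s j := by rw [← hij, hmem]; exact Finset.mem_singleton_self i
    have := (hmem j {i}).mp h1
    exact (Finset.mem_singleton.mp this).symm
  refine ⟨Finset.univ.image s, ?_, by
    rw [Finset.card_image_of_injective _ hsinj, Finset.card_univ, Fintype.card_fin]⟩
  intro B hB
  set C : Finset (Fin k) := Finset.univ.filter (fun i => s i ∈ B) with hC
  refine ⟨{t ∈ F | φ C ∈ t}, ⟨φ C, rfl⟩, ?_⟩
  ext t
  simp only [Set.mem_inter_iff, Set.mem_setOf_eq, Finset.coe_image, Set.mem_image,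
    Finset.mem_coe, Finset.mem_univ, Finset.coe_univ, Set.mem_univ, true_and]
  constructor
  · rintro ⟨⟨_, hφt⟩, i, _, rfl⟩
    have : i ∈ C := (hmem i C).mp hφt
    exact (Finset.mem_filter.mp this).2
  · intro htB
    obtain ⟨i, rfl⟩ := by
      have := hB htB
      simpa using this
    exact ⟨⟨hsF i, (hmem i C).mpr (Finset.mem_filter.mpr ⟨Finset.mem_univ i, htB⟩)⟩,
      i, rfl⟩

end Aux

/-- A family is a VC-class iff its dual family is a VC-class. -/
theorem stmt2 {α : Type*} (F : Set (Set α)) :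
    IsVCClass F ↔ IsVCClass (DualFamily F) := by
  have h2 : ∀ n : ℕ, 1 ≤ 2 ^ (n + 1) := fun n => Nat.one_le_two_pow
  constructor
  · rintro ⟨n, hn⟩
    refine ⟨2 ^ (n + 1) - 1, ?_⟩
    intro A hA
    by_contra hlt
    push_neg at hlt
    obtain ⟨P, hP, hPc⟩ := aux_dual_to_primal (k := n+1) A hA (by have := h2 n; omega)
    have := hn P hP
    omega
  · rintro ⟨n, hn⟩
    refine ⟨2 ^ (n + 1) - 1, ?_⟩
    intro A hA
    by_contra hlt
    push_neg at hlt
    obtain ⟨P, hP, hPc⟩ := aux_primal_to_dual (k := n+1) A hA (by have := h2 n; omega)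
    have := hn P hP
    omega
end
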